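/- Let G be a nonempty finite simple graph that is pure, i.e., every maximal clique of G has exactly N vertices (for some fixed N ≥ 1). Then dim G = N − 1. -/

import Mathlib

open Classical in
/-- The Knill inductive dimension of the subgraph of `G` induced on the
finite vertex set `A`: the empty graph has dimension `-1`, and otherwise
`dim = (1/|A|) · Σ_{v ∈ A} (1 + dim S(v))`, where the sphere `S(v)` is the
induced subgraph on the neighbors of `v` inside `A`. -/
noncomputable def gdim {V : Type*} (G : SimpleGraph V) (A : Finset V) : ℚ :=
  if A.card = 0 then -1
  else (A.card : ℚ)⁻¹ *
    ∑ v ∈ A.attach, (1 + gdim G (A.filter (fun u => G.Adj v.1 u)))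
termination_by A.card
decreasing_by
  apply Finset.card_lt_card
  refine ⟨Finset.filter_subset _ _, fun hsub => ?_⟩
  have hv := hsub v.2
  rw [Finset.mem_filter] at hv
  first
  | exact G.irrefl hv.2
  | exact G.loopless.irrefl v.1 hv.2

open Classical in
lemma exists_maximal_clique {V : Type*} [Fintype V] (G : SimpleGraph V)
    (K : Finset V) (hK : G.IsClique (K : Set V)) :
    ∃ t : Finset V, G.IsClique (t : Set V) ∧ K ⊆ t ∧
      ∀ t' : Finset V, G.IsClique (t' : Set V) → t ⊆ t' → t' = t := by
  classical
  have hne : (Finset.univ.filter (fun t : Finset V => G.IsClique (t : Set V) ∧ K ⊆ t)).Nonempty :=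
    ⟨K, by simp [hK]⟩
  obtain ⟨t, ht, hmax⟩ := Finset.exists_max_image _ (fun t => t.card) hne
  simp only [Finset.mem_filter, Finset.mem_univ, true_and] at ht hmax
  refine ⟨t, ht.1, ht.2, fun t' ht' hsub => ?_⟩
  have hK' : K ⊆ t' := ht.2.trans hsub
  have := hmax t' ⟨ht', hK'⟩
  exact (Finset.eq_of_subset_of_card_le hsub this).symm

open Classical in
lemma gdim_common_nbhd {V : Type*} [Fintype V] (G : SimpleGraph V) (N : ℕ)
    (hpure : ∀ s : Finset V, G.IsClique (s : Set V) →
      (∀ t : Finset V, G.IsClique (t : Set V) → s ⊆ t → t = s) → s.card = N) :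
    ∀ m : ℕ, ∀ K : Finset V, G.IsClique (K : Set V) → K.card + m = N →
      gdim G (Finset.univ.filter (fun u => ∀ w ∈ K, G.Adj w u)) = (m : ℚ) - 1 := by
  classical
  intro m
  induction m with
  | zero =>
    intro K hK hcard
    have hA : (Finset.univ.filter (fun u => ∀ w ∈ K, G.Adj w u)) = ∅ := by
      rw [Finset.eq_empty_iff_forall_notMem]
      intro u hu
      rw [Finset.mem_filter] at hu
      have huK : u ∉ K := fun h => G.irrefl (hu.2 u h)
      have hK' : G.IsClique ((insert u K : Finset V) : Set V) := by
        rw [Finset.coe_insert]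
        exact hK.insert (fun b hb _ => (hu.2 b hb).symm)
      obtain ⟨t, htc, hts, htmax⟩ := exists_maximal_clique G _ hK'
      have htN := hpure t htc htmax
      have : (insert u K).card ≤ t.card := Finset.card_le_card hts
      rw [Finset.card_insert_of_notMem huK, htN] at this
      omega
    rw [hA, gdim]
    simp
  | succ m ih =>
    intro K hK hcard
    set A := Finset.univ.filter (fun u => ∀ w ∈ K, G.Adj w u) with hAdef
    have hmemA : ∀ u, u ∈ A ↔ ∀ w ∈ K, G.Adj w u := by
      intro u; rw [hAdef, Finset.mem_filter]; simp
    have hAne : A.Nonempty := by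
      obtain ⟨t, htc, hts, htmax⟩ := exists_maximal_clique G K hK
      have htN := hpure t htc htmax
      have : K.card < t.card := by omega
      obtain ⟨u, hut, huK⟩ := Finset.exists_of_ssubset (lt_of_le_of_ne hts (by
        intro h; rw [h] at this; omega))
      exact ⟨u, (hmemA u).2 (fun w hw => htc (hts hw) hut (fun h => huK (h ▸ hw)))⟩
    have hAcard : A.card ≠ 0 := by
      simpa [Finset.card_eq_zero, ← Finset.not_nonempty_iff_eq_empty] using
        fun h => (Finset.not_nonempty_iff_eq_empty.mpr h) hAne
    rw [gdim, if_neg hAcard]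
    have hterm : ∀ v : {x // x ∈ A},
        gdim G (A.filter (fun u => G.Adj v.1 u)) = (m : ℚ) - 1 := by
      intro v
      have hvA := (hmemA v.1).1 v.2
      have hvK : v.1 ∉ K := fun h => G.irrefl (hvA v.1 h)
      have hfilter : A.filter (fun u => G.Adj v.1 u)
          = Finset.univ.filter (fun u => ∀ w ∈ insert v.1 K, G.Adj w u) := by
        ext u
        simp only [Finset.mem_filter, Finset.mem_univ, true_and, Finset.mem_insert, hmemA]
        constructor
        · rintro ⟨h1, h2⟩ w (rfl | hw)
          · exact h2
          · exact h1 w hw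
        · intro h
          exact ⟨fun w hw => h w (Or.inr hw), h v.1 (Or.inl rfl)⟩
      rw [hfilter]
      apply ih
      · rw [Finset.coe_insert]
        exact hK.insert (fun b hb _ => (hvA b hb).symm)
      · rw [Finset.card_insert_of_notMem hvK]; omega
    have hsum : ∑ v ∈ A.attach, (1 + gdim G (A.filter (fun u => G.Adj v.1 u)))
        = (A.card : ℚ) * ((m : ℚ) + 1 - 1) := by
      rw [Finset.sum_congr rfl (fun v _ => by rw [hterm v])]
      rw [Finset.sum_const, Finset.card_attach]
      push_cast; ring
    rw [hsum]
    rw [inv_mul_cancel_left₀ (by exact_mod_cast hAcard)]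
    push_cast; ring

/-- If `G` is a nonempty finite simple graph all of whose
maximal cliques have exactly `N` vertices (`N ≥ 1`), then `dim G = N − 1`. -/
theorem dim_of_pure {V : Type*} [Fintype V] [Nonempty V] (G : SimpleGraph V)
    (N : ℕ) (hN : 1 ≤ N)
    (hpure : ∀ s : Finset V, G.IsClique (s : Set V) →
      (∀ t : Finset V, G.IsClique (t : Set V) → s ⊆ t → t = s) → s.card = N) :
    gdim G Finset.univ = (N : ℚ) - 1 := by
  classical
  have h := gdim_common_nbhd G N hpure N ∅ (by simp) (by simp)
  simpa using h
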